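/- arXiv:1507.08558 — 8 statements merged into one kernel-verified Lean document; each statement's English description precedes it below -/
import Mathlib

section
/- Let k be an algebraically closed field, b₀ a positive integer, and R a commutative k-algebra whose zero ideal is primary (i.e., R is nontrivial and whenever a·b = 0 in R, either a = 0 or b is nilpotent) and whose nilradical Nil(R) satisfies Nil(R)^{k₀} = 0 for a given positive integer k₀. Let f, g ∈ R[t₁, …, t_d] be polynomials such that g^{k₀}·f^{b₀} ≠ 0 in R[t₁, …, t_d]. Then there exists a tuple (r₁, …, r_d) ∈ R × ⋯ × R such that for every natural number m, g(r₁,…,r_d)^m · f(r₁,…,r_d)^{b₀} ≠ 0 in R; equivalently, the image of f(r₁,…,r_d)^{b₀} in the localization R[1/g(r₁,…,r_d)] is nonzero. -/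
open MvPolynomial in
theorem aux_exists_eval_ne_zero
    (k : Type*) [Field k] [Infinite k]
    (R : Type*) [CommRing R] [Algebra k R]
    {d : ℕ} {h : MvPolynomial (Fin d) R} (hh : h ≠ 0) :
    ∃ x : Fin d → k, eval (fun i => algebraMap k R (x i)) h ≠ 0 := by
  by_contra hc
  push_neg at hc
  apply hh
  ext s
  rw [coeff_zero]
  rw [← Module.forall_dual_apply_eq_zero_iff k]
  intro φ
  set H : MvPolynomial (Fin d) k :=
    ∑ t ∈ h.support, monomial t (φ (h.coeff t)) with hH
  have hHeval : ∀ x : Fin d → k, eval x H = 0 := by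
    intro x
    have key : eval x H = φ (eval (fun i => algebraMap k R (x i)) h) := by
      rw [hH, map_sum, eval_eq]
      rw [map_sum]
      refine Finset.sum_congr rfl fun t _ => ?_
      rw [eval_monomial]
      have : (∏ i ∈ t.support, (algebraMap k R (x i)) ^ t i)
          = algebraMap k R (∏ i ∈ t.support, x i ^ t i) := by
        rw [map_prod]; simp [map_pow]
      rw [this, mul_comm (h.coeff t), ← Algebra.smul_def, map_smul, smul_eq_mul, mul_comm]
      rw [Finsupp.prod.eq_1]
    rw [key, hc x, map_zero]
  have hH0 : H = 0 := by
    apply MvPolynomial.funext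
    intro x; rw [hHeval x, map_zero]
  by_cases hs : s ∈ h.support
  · have := congrArg (fun p => MvPolynomial.coeff s p) hH0
    simpa [hH, coeff_sum, coeff_monomial, Finset.sum_ite_eq' h.support s, hs] using this
  · simp only [MvPolynomial.mem_support_iff, not_not] at hs
    rw [hs, map_zero]

/-- **Key step in Lemma `RightOrder`.**
Let `k` be an algebraically closed field, `b₀ > 0`, and `R` a commutative `k`-algebra
whose zero ideal is primary and whose nilradical satisfies `Nil(R) ^ k₀ = 0` for a given
`k₀ > 0`.  If `f, g ∈ R[t₁, …, t_d]` satisfy `g ^ k₀ * f ^ b₀ ≠ 0`, then there is a tuple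
`r ∈ R × ⋯ × R` such that `g(r) ^ m * f(r) ^ b₀ ≠ 0` for every `m : ℕ`; i.e. the image of
`f(r) ^ b₀` in the localization `R[1/g(r)]` is nonzero. -/
theorem exists_eval_pow_mul_pow_ne_zero
    (k : Type*) [Field k] [IsAlgClosed k]
    (R : Type*) [CommRing R] [Algebra k R]
    (b₀ k₀ : ℕ) (hb₀ : 0 < b₀) (hk₀ : 0 < k₀)
    (hprimary : (⊥ : Ideal R).IsPrimary)
    (hnil : (nilradical R) ^ k₀ = ⊥)
    (d : ℕ) (f g : MvPolynomial (Fin d) R)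
    (h : g ^ k₀ * f ^ b₀ ≠ 0) :
    ∃ r : Fin d → R, ∀ m : ℕ,
      (MvPolynomial.eval r g) ^ m * (MvPolynomial.eval r f) ^ b₀ ≠ 0 := by
  obtain ⟨hne, hp⟩ := Ideal.isPrimary_iff.mp hprimary
  obtain ⟨x, hx⟩ := aux_exists_eval_ne_zero k R h
  set r : Fin d → R := fun i => algebraMap k R (x i) with hr
  refine ⟨r, ?_⟩
  set G := MvPolynomial.eval r g with hG
  set F := (MvPolynomial.eval r f) ^ b₀ with hF
  have hGF : G ^ k₀ * F ≠ 0 := by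
    simpa only [map_mul, map_pow] using hx
  have hFne : F ≠ 0 := by
    intro h0
    exact hGF (by rw [h0, mul_zero])
  have hGnil : G ∉ nilradical R := by
    intro hGmem
    have : G ^ k₀ ∈ (nilradical R) ^ k₀ := Ideal.pow_mem_pow hGmem k₀
    rw [hnil, Ideal.mem_bot] at this
    exact hGF (by rw [this, zero_mul])
  intro m
  induction m with
  | zero => simpa using hFne
  | succ n ih =>
      intro h0
      have hmem : (G ^ n * F) * G ∈ (⊥ : Ideal R) := by
        rw [Ideal.mem_bot]
        calc (G ^ n * F) * G = G ^ (n + 1) * F := by ring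
        _ = 0 := h0
      rcases hp hmem with h1 | h2
      · exact ih (Ideal.mem_bot.mp h1)
      · exact hGnil (by simpa [nilradical] using h2)
end

section
/- Let k be an algebraically closed field and b₀ a positive integer. Consider the k-algebra homomorphism φ : k[x,y,z] → k[t] determined by x ↦ t³, y ↦ t^{3b₀+5}, z ↦ t^{3b₀+4}. Then the kernel of φ is the ideal I of k[x,y,z] generated by the three polynomials m₁ = y² − x^{b₀+2}z, m₂ = zy − x^{2b₀+3}, m₃ = z² − x^{b₀+1}y (the 2×2 minors of the matrix A with rows (z, x^{b₀+1}), (y, z), (x^{b₀+2}, y)). In particular, k[x,y,z]/I is isomorphic as a k-algebra to the subring k[t³, t^{3b₀+5}, t^{3b₀+4}] of k[t]. -/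
open MvPolynomial

lemma key_coeffs_aux (k : Type*) [Field k] (b₀ : ℕ) (p q r : Polynomial k)
    (h : Polynomial.expand k 3 p + Polynomial.expand k 3 q * Polynomial.X ^ (3*b₀+5)
          + Polynomial.expand k 3 r * Polynomial.X ^ (3*b₀+4) = 0) :
    p = 0 ∧ q = 0 ∧ r = 0 := by
  have h3 : (0:ℕ) < 3 := by norm_num
  refine ⟨?_, ?_, ?_⟩
  · ext n
    have h1 := congrArg (fun s => Polynomial.coeff s (3*n)) h
    simp only [Polynomial.coeff_add, Polynomial.coeff_mul_X_pow',
      Polynomial.coeff_expand h3, Polynomial.coeff_zero] at h1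
    split_ifs at h1 <;> try (exfalso; omega)
    all_goals
      rw [Nat.mul_div_cancel_left n h3] at h1
      simpa using h1
  · ext n
    have h1 := congrArg (fun s => Polynomial.coeff s (3*n + (3*b₀+5))) h
    simp only [Polynomial.coeff_add, Polynomial.coeff_mul_X_pow',
      Polynomial.coeff_expand h3, Polynomial.coeff_zero] at h1
    split_ifs at h1 <;> try (exfalso; omega)
    all_goals
      rw [Nat.add_sub_cancel, Nat.mul_div_cancel_left n h3] at h1
      simpa using h1
  · ext n
    have h1 := congrArg (fun s => Polynomial.coeff s (3*n + (3*b₀+4))) h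
    simp only [Polynomial.coeff_add, Polynomial.coeff_mul_X_pow',
      Polynomial.coeff_expand h3, Polynomial.coeff_zero] at h1
    split_ifs at h1 <;> try (exfalso; omega)
    all_goals
      rw [Nat.add_sub_cancel, Nat.mul_div_cancel_left n h3] at h1
      simpa using h1

lemma reduce_mod_I_aux (k : Type*) [Field k] (b₀ : ℕ)
    (I : Ideal (MvPolynomial (Fin 3) k))
    (hI : I = Ideal.span {X 1 ^ 2 - X 0 ^ (b₀ + 2) * X 2,
                          X 2 * X 1 - X 0 ^ (2 * b₀ + 3),
                          X 2 ^ 2 - X 0 ^ (b₀ + 1) * X 1})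
    (f : MvPolynomial (Fin 3) k) :
    ∃ p q r : Polynomial k,
      f - (Polynomial.aeval (X 0) p + Polynomial.aeval (X 0) q * X 1
            + Polynomial.aeval (X 0) r * X 2) ∈ I := by
  have hm1 : (X 1 ^ 2 - X 0 ^ (b₀ + 2) * X 2 : MvPolynomial (Fin 3) k) ∈ I := by
    rw [hI]; exact Ideal.subset_span (by simp)
  have hm2 : (X 2 * X 1 - X 0 ^ (2 * b₀ + 3) : MvPolynomial (Fin 3) k) ∈ I := by
    rw [hI]; exact Ideal.subset_span (by simp)
  have hm3 : (X 2 ^ 2 - X 0 ^ (b₀ + 1) * X 1 : MvPolynomial (Fin 3) k) ∈ I := by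
    rw [hI]; exact Ideal.subset_span (by simp)
  induction f using MvPolynomial.induction_on with
  | C a =>
    refine ⟨Polynomial.C a, 0, 0, ?_⟩
    simpa using I.zero_mem
  | add f g hf hg =>
    obtain ⟨p, q, r, hf⟩ := hf
    obtain ⟨p', q', r', hg⟩ := hg
    refine ⟨p + p', q + q', r + r', ?_⟩
    convert I.add_mem hf hg using 1
    simp only [map_add]
    ring
  | mul_X f n hf =>
    obtain ⟨p, q, r, hf⟩ := hf
    fin_cases n <;> simp only [Fin.zero_eta, Fin.mk_one, Fin.reduceFinMk]
    · refine ⟨p * Polynomial.X, q * Polynomial.X, r * Polynomial.X, ?_⟩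
      have : f * X 0 - (Polynomial.aeval (X 0) (p * Polynomial.X)
            + Polynomial.aeval (X 0) (q * Polynomial.X) * X 1
            + Polynomial.aeval (X 0) (r * Polynomial.X) * X 2)
          = (f - (Polynomial.aeval (X 0) p + Polynomial.aeval (X 0) q * X 1
            + Polynomial.aeval (X 0) r * X 2)) * X 0 := by
        simp only [map_mul, Polynomial.aeval_X]
        ring
      rw [this]
      exact I.mul_mem_right _ hf
    · refine ⟨r * Polynomial.X ^ (2*b₀+3), p, q * Polynomial.X ^ (b₀+2), ?_⟩
      have : f * X 1 - (Polynomial.aeval (X 0) (r * Polynomial.X ^ (2*b₀+3))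
            + Polynomial.aeval (X 0) p * X 1
            + Polynomial.aeval (X 0) (q * Polynomial.X ^ (b₀+2)) * X 2)
          = (f - (Polynomial.aeval (X 0) p + Polynomial.aeval (X 0) q * X 1
            + Polynomial.aeval (X 0) r * X 2)) * X 1
            + Polynomial.aeval (X 0) q * (X 1 ^ 2 - X 0 ^ (b₀ + 2) * X 2)
            + Polynomial.aeval (X 0) r * (X 2 * X 1 - X 0 ^ (2 * b₀ + 3)) := by
        simp only [map_mul, map_pow, Polynomial.aeval_X]
        ring
      rw [this]
      exact I.add_mem (I.add_mem (I.mul_mem_right _ hf) (I.mul_mem_left _ hm1))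
        (I.mul_mem_left _ hm2)
    · refine ⟨q * Polynomial.X ^ (2*b₀+3), r * Polynomial.X ^ (b₀+1), p, ?_⟩
      have : f * X 2 - (Polynomial.aeval (X 0) (q * Polynomial.X ^ (2*b₀+3))
            + Polynomial.aeval (X 0) (r * Polynomial.X ^ (b₀+1)) * X 1
            + Polynomial.aeval (X 0) p * X 2)
          = (f - (Polynomial.aeval (X 0) p + Polynomial.aeval (X 0) q * X 1
            + Polynomial.aeval (X 0) r * X 2)) * X 2
            + Polynomial.aeval (X 0) q * (X 2 * X 1 - X 0 ^ (2 * b₀ + 3))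
            + Polynomial.aeval (X 0) r * (X 2 ^ 2 - X 0 ^ (b₀ + 1) * X 1) := by
        simp only [map_mul, map_pow, Polynomial.aeval_X]
        ring
      rw [this]
      exact I.add_mem (I.add_mem (I.mul_mem_right _ hf) (I.mul_mem_left _ hm2))
        (I.mul_mem_left _ hm3)

/-- **Claim in Lemma `MainLemma`.**
Let `k` be an algebraically closed field and `b₀ > 0`.  The kernel of the `k`-algebra
homomorphism `φ : k[x,y,z] → k[t]` with `x ↦ t³`, `y ↦ t^{3b₀+5}`, `z ↦ t^{3b₀+4}`
is the ideal `I` generated by the maximal minors `m₁ = y² − x^{b₀+2}z`,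
`m₂ = zy − x^{2b₀+3}`, `m₃ = z² − x^{b₀+1}y` of the matrix with rows
`(z, x^{b₀+1})`, `(y, z)`, `(x^{b₀+2}, y)`.  In particular `k[x,y,z]/I` is isomorphic
as a `k`-algebra to the subalgebra `k[t³, t^{3b₀+5}, t^{3b₀+4}]` of `k[t]`. -/
theorem ker_aeval_eq_span_minors
    (k : Type*) [Field k] [IsAlgClosed k] (b₀ : ℕ) (hb₀ : 0 < b₀)
    (I : Ideal (MvPolynomial (Fin 3) k))
    (hI : I = Ideal.span {X 1 ^ 2 - X 0 ^ (b₀ + 2) * X 2,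
                          X 2 * X 1 - X 0 ^ (2 * b₀ + 3),
                          X 2 ^ 2 - X 0 ^ (b₀ + 1) * X 1}) :
    RingHom.ker (aeval
        ![(Polynomial.X : Polynomial k) ^ 3, Polynomial.X ^ (3 * b₀ + 5),
          Polynomial.X ^ (3 * b₀ + 4)] : MvPolynomial (Fin 3) k →ₐ[k] Polynomial k) = I ∧
    Nonempty ((MvPolynomial (Fin 3) k ⧸ I) ≃ₐ[k]
      Algebra.adjoin k {(Polynomial.X : Polynomial k) ^ 3,
        Polynomial.X ^ (3 * b₀ + 5), Polynomial.X ^ (3 * b₀ + 4)}) := by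
  set v : Fin 3 → Polynomial k :=
    ![(Polynomial.X : Polynomial k) ^ 3, Polynomial.X ^ (3 * b₀ + 5),
      Polynomial.X ^ (3 * b₀ + 4)] with hv
  set φ : MvPolynomial (Fin 3) k →ₐ[k] Polynomial k := aeval v with hφ
  have hv0 : v 0 = Polynomial.X ^ 3 := rfl
  have hv1 : v 1 = Polynomial.X ^ (3 * b₀ + 5) := rfl
  have hv2 : v 2 = Polynomial.X ^ (3 * b₀ + 4) := rfl
  -- I ⊆ ker φ
  have hIker : I ≤ RingHom.ker φ := by
    rw [hI, Ideal.span_le]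
    rintro g (rfl | rfl | rfl) <;>
    · simp only [hφ, SetLike.mem_coe, RingHom.mem_ker, map_sub, map_mul, map_pow, aeval_X,
        hv0, hv1, hv2, ← pow_mul, ← pow_add, sub_eq_zero]
      congr 1
      ring
  -- ker φ ⊆ I
  have hkerI : RingHom.ker φ ≤ I := by
    intro f hf
    rw [RingHom.mem_ker] at hf
    obtain ⟨p, q, r, hmem⟩ := reduce_mod_I_aux k b₀ I hI f
    have hφform : φ (Polynomial.aeval (X 0) p + Polynomial.aeval (X 0) q * X 1
        + Polynomial.aeval (X 0) r * X 2) = 0 := by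
      have h0 : φ (f - (Polynomial.aeval (X 0) p + Polynomial.aeval (X 0) q * X 1
          + Polynomial.aeval (X 0) r * X 2)) = 0 := hIker hmem
      rw [map_sub, hf, zero_sub, neg_eq_zero] at h0
      exact h0
    have hexp : Polynomial.expand k 3 p
        + Polynomial.expand k 3 q * Polynomial.X ^ (3*b₀+5)
        + Polynomial.expand k 3 r * Polynomial.X ^ (3*b₀+4) = 0 := by
      have hcomp : ∀ s : Polynomial k, φ (Polynomial.aeval (X 0) s)
          = Polynomial.expand k 3 s := by
        intro s
        rw [← Polynomial.aeval_algHom_apply]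
        have : φ (X 0) = Polynomial.X ^ 3 := by simp [hφ, hv0]
        rw [this, ← Polynomial.expand_aeval 3 s Polynomial.X,
          Polynomial.aeval_X_left_apply]
      rw [← hcomp p, ← hcomp q, ← hcomp r, ← hφform]
      simp only [map_add, map_mul]
      have h1 : φ (X 1) = Polynomial.X ^ (3*b₀+5) := by simp [hφ, hv1]
      have h2 : φ (X 2) = Polynomial.X ^ (3*b₀+4) := by simp [hφ, hv2]
      rw [h1, h2]
    obtain ⟨hp, hq, hr⟩ := key_coeffs_aux k b₀ p q r hexp
    subst hp; subst hq; subst hr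
    simpa using hmem
  have hker : RingHom.ker φ = I := le_antisymm hkerI hIker
  refine ⟨hker, ?_⟩
  have hrange : φ.range = Algebra.adjoin k {(Polynomial.X : Polynomial k) ^ 3,
      Polynomial.X ^ (3 * b₀ + 5), Polynomial.X ^ (3 * b₀ + 4)} := by
    rw [← Algebra.adjoin_range_eq_range_aeval]
    congr 1
    rw [hv]
    ext w
    simp only [Matrix.range_cons, Matrix.range_empty, Set.union_empty, Set.mem_union,
      Set.mem_singleton_iff, Set.mem_insert_iff]
  exact ⟨(Ideal.quotientEquivAlgOfEq k hker.symm).trans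
    ((Ideal.quotientEquivAlgOfEq k (AlgHom.ker_rangeRestrict φ).symm).trans
      ((Ideal.quotientKerAlgEquivOfSurjective φ.rangeRestrict_surjective).trans
        (Subalgebra.equivOfEq _ _ hrange)))⟩
end

section
/- Let k be a field and b₀ a positive integer, and let I ⊆ k[x,y,z] be the ideal generated by m₁ = y² − x^{b₀+2}z, m₂ = zy − x^{2b₀+3}, m₃ = z² − x^{b₀+1}y. Give the variables the weights deg x = 3, deg y = 3b₀+5, deg z = 3b₀+4. Then any two monomials of the same weighted degree are congruent modulo I: for all natural numbers a, b, c, a′, b′, c′ with 3a + (3b₀+5)b + (3b₀+4)c = 3a′ + (3b₀+5)b′ + (3b₀+4)c′, one has x^a y^b z^c ≡ x^{a′} y^{b′} z^{c′} (mod I). Consequently each graded piece of k[x,y,z]/I with respect to this grading has k-dimension at most 1. -/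
open MvPolynomial

/-- **Grading computation in Lemma `MainLemma`.**
Let `k` be a field, `b₀ > 0`, and `I = (m₁, m₂, m₃) ⊆ k[x,y,z]` the ideal of the maximal
minors, where the variables carry the weights `deg x = 3`, `deg y = 3b₀+5`, `deg z = 3b₀+4`.
Any two monomials of the same weighted degree are congruent mod `I`; consequently every
weighted graded piece of `k[x,y,z]/I` has `k`-dimension at most `1`. -/
theorem monomials_same_weight_congruent_mod_minors
    (k : Type*) [Field k] (b₀ : ℕ) (hb₀ : 0 < b₀)
    (I : Ideal (MvPolynomial (Fin 3) k))
    (hI : I = Ideal.span {X 1 ^ 2 - X 0 ^ (b₀ + 2) * X 2,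
                          X 2 * X 1 - X 0 ^ (2 * b₀ + 3),
                          X 2 ^ 2 - X 0 ^ (b₀ + 1) * X 1}) :
    (∀ a b c a' b' c' : ℕ,
        3 * a + (3 * b₀ + 5) * b + (3 * b₀ + 4) * c =
          3 * a' + (3 * b₀ + 5) * b' + (3 * b₀ + 4) * c' →
        X 0 ^ a * X 1 ^ b * X 2 ^ c - X 0 ^ a' * X 1 ^ b' * X 2 ^ c' ∈ I) ∧
    (∀ n : ℕ, Module.rank k
        (Submodule.map (Ideal.Quotient.mkₐ k I).toLinearMap
          (weightedHomogeneousSubmodule k ![3, 3 * b₀ + 5, 3 * b₀ + 4] n)) ≤ 1) := by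
  have hm1 : (X 1 ^ 2 - X 0 ^ (b₀ + 2) * X 2 : MvPolynomial (Fin 3) k) ∈ I := by
    rw [hI]; exact Ideal.subset_span (by simp)
  have hm2 : (X 2 * X 1 - X 0 ^ (2 * b₀ + 3) : MvPolynomial (Fin 3) k) ∈ I := by
    rw [hI]; exact Ideal.subset_span (by simp)
  have hm3 : (X 2 ^ 2 - X 0 ^ (b₀ + 1) * X 1 : MvPolynomial (Fin 3) k) ∈ I := by
    rw [hI]; exact Ideal.subset_span (by simp)
  have L1 : ∀ a b c : ℕ, (X 0 ^ a * X 1 ^ (b + 2) * X 2 ^ c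
      - X 0 ^ (a + (b₀ + 2)) * X 1 ^ b * X 2 ^ (c + 1) : MvPolynomial (Fin 3) k) ∈ I := by
    intro a b c
    have h : (X 0 ^ a * X 1 ^ (b + 2) * X 2 ^ c
        - X 0 ^ (a + (b₀ + 2)) * X 1 ^ b * X 2 ^ (c + 1) : MvPolynomial (Fin 3) k)
        = (X 0 ^ a * X 1 ^ b * X 2 ^ c) * (X 1 ^ 2 - X 0 ^ (b₀ + 2) * X 2) := by
      rw [pow_add, pow_add, pow_add]; ring
    rw [h]; exact I.mul_mem_left _ hm1
  have L2 : ∀ a b c : ℕ, (X 0 ^ a * X 1 ^ (b + 1) * X 2 ^ (c + 1)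
      - X 0 ^ (a + (2 * b₀ + 3)) * X 1 ^ b * X 2 ^ c : MvPolynomial (Fin 3) k) ∈ I := by
    intro a b c
    have h : (X 0 ^ a * X 1 ^ (b + 1) * X 2 ^ (c + 1)
        - X 0 ^ (a + (2 * b₀ + 3)) * X 1 ^ b * X 2 ^ c : MvPolynomial (Fin 3) k)
        = (X 0 ^ a * X 1 ^ b * X 2 ^ c) * (X 2 * X 1 - X 0 ^ (2 * b₀ + 3)) := by
      rw [pow_add, pow_add, pow_add]; ring
    rw [h]; exact I.mul_mem_left _ hm2
  have L3 : ∀ a b c : ℕ, (X 0 ^ a * X 1 ^ b * X 2 ^ (c + 2)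
      - X 0 ^ (a + (b₀ + 1)) * X 1 ^ (b + 1) * X 2 ^ c : MvPolynomial (Fin 3) k) ∈ I := by
    intro a b c
    have h : (X 0 ^ a * X 1 ^ b * X 2 ^ (c + 2)
        - X 0 ^ (a + (b₀ + 1)) * X 1 ^ (b + 1) * X 2 ^ c : MvPolynomial (Fin 3) k)
        = (X 0 ^ a * X 1 ^ b * X 2 ^ c) * (X 2 ^ 2 - X 0 ^ (b₀ + 1) * X 1) := by
      rw [pow_add, pow_add, pow_add]; ring
    rw [h]; exact I.mul_mem_left _ hm3
  -- normal form
  have NF : ∀ N a b c : ℕ, b + c ≤ N → ∃ A B C : ℕ, B ≤ 1 ∧ C ≤ 1 ∧ B * C = 0 ∧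
      3 * A + (3 * b₀ + 5) * B + (3 * b₀ + 4) * C
        = 3 * a + (3 * b₀ + 5) * b + (3 * b₀ + 4) * c ∧
      (X 0 ^ a * X 1 ^ b * X 2 ^ c - X 0 ^ A * X 1 ^ B * X 2 ^ C : MvPolynomial (Fin 3) k)
        ∈ I := by
    intro N
    induction N with
    | zero =>
      intro a b c h
      obtain ⟨rfl, rfl⟩ : b = 0 ∧ c = 0 := by omega
      exact ⟨a, 0, 0, by omega, by omega, by omega, rfl, by simp⟩
    | succ N ih =>
      intro a b c h
      by_cases hb : 2 ≤ b
      · obtain ⟨b', rfl⟩ : ∃ b', b = b' + 2 := ⟨b - 2, by omega⟩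
        obtain ⟨A, B, C, h1, h2, h3, h4, h5⟩ :=
          ih (a + (b₀ + 2)) b' (c + 1) (by omega)
        refine ⟨A, B, C, h1, h2, h3, h4.trans (by ring), ?_⟩
        have := I.add_mem (L1 a b' c) h5
        rwa [sub_add_sub_cancel] at this
      · by_cases hc : 2 ≤ c
        · obtain ⟨c', rfl⟩ : ∃ c', c = c' + 2 := ⟨c - 2, by omega⟩
          obtain ⟨A, B, C, h1, h2, h3, h4, h5⟩ :=
            ih (a + (b₀ + 1)) (b + 1) c' (by omega)
          refine ⟨A, B, C, h1, h2, h3, h4.trans (by ring), ?_⟩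
          have := I.add_mem (L3 a b c') h5
          rwa [sub_add_sub_cancel] at this
        · by_cases hbc : b = 1 ∧ c = 1
          · obtain ⟨rfl, rfl⟩ := hbc
            obtain ⟨A, B, C, h1, h2, h3, h4, h5⟩ :=
              ih (a + (2 * b₀ + 3)) 0 0 (by omega)
            refine ⟨A, B, C, h1, h2, h3, h4.trans (by ring), ?_⟩
            have := I.add_mem (L2 a 0 0) h5
            rwa [sub_add_sub_cancel] at this
          · refine ⟨a, b, c, by omega, by omega, ?_, rfl, by simp⟩
            rcases (show b = 0 ∨ c = 0 by omega) with h | h <;> simp [h]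
  -- uniqueness of normal forms
  have uniq : ∀ A B C A' B' C' : ℕ, B ≤ 1 → C ≤ 1 → B * C = 0 →
      B' ≤ 1 → C' ≤ 1 → B' * C' = 0 →
      3 * A + (3 * b₀ + 5) * B + (3 * b₀ + 4) * C
        = 3 * A' + (3 * b₀ + 5) * B' + (3 * b₀ + 4) * C' →
      A = A' ∧ B = B' ∧ C = C' := by
    intro A B C A' B' C' h1 h2 h3 h4 h5 h6 h7
    interval_cases B <;> interval_cases C <;> interval_cases B' <;> interval_cases C' <;>
      omega
  have hcong : ∀ a b c a' b' c' : ℕ,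
      3 * a + (3 * b₀ + 5) * b + (3 * b₀ + 4) * c =
        3 * a' + (3 * b₀ + 5) * b' + (3 * b₀ + 4) * c' →
      (X 0 ^ a * X 1 ^ b * X 2 ^ c - X 0 ^ a' * X 1 ^ b' * X 2 ^ c'
        : MvPolynomial (Fin 3) k) ∈ I := by
    intro a b c a' b' c' hw
    obtain ⟨A, B, C, h1, h2, h3, h4, h5⟩ := NF (b + c) a b c le_rfl
    obtain ⟨A', B', C', h1', h2', h3', h4', h5'⟩ := NF (b' + c') a' b' c' le_rfl
    obtain ⟨rfl, rfl, rfl⟩ :=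
      uniq A B C A' B' C' h1 h2 h3 h1' h2' h3' (h4.trans (hw.trans h4'.symm))
    have := I.sub_mem h5 h5'
    rwa [sub_sub_sub_cancel_right] at this
  refine ⟨hcong, fun n => ?_⟩
  -- weighted degree of an exponent vector
  have hwdeg : ∀ e : Fin 3 →₀ ℕ,
      (Finsupp.weight ![3, 3 * b₀ + 5, 3 * b₀ + 4]) e
        = 3 * e 0 + (3 * b₀ + 5) * e 1 + (3 * b₀ + 4) * e 2 := by
    intro e
    rw [Finsupp.weight_apply, Finsupp.sum_fintype]
    · simp only [Fin.sum_univ_three, smul_eq_mul]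
      simp [Matrix.cons_val_zero, Matrix.cons_val_one]
      ring
    · intro i; simp
  have hmon : ∀ e : Fin 3 →₀ ℕ, (monomial e (1 : k) : MvPolynomial (Fin 3) k)
      = X 0 ^ e 0 * X 1 ^ e 1 * X 2 ^ e 2 := by
    intro e
    rw [monomial_eq, Finsupp.prod_pow, Fin.prod_univ_three]
    simp [mul_assoc]
  haveI : Module.Free k
      ↥(Submodule.map (Ideal.Quotient.mkₐ k I).toLinearMap
        (weightedHomogeneousSubmodule k ![3, 3 * b₀ + 5, 3 * b₀ + 4] n)) :=
    Module.Free.of_divisionRing k _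
  rw [rank_submodule_le_one_iff']
  by_cases hex : ∃ d : Fin 3 →₀ ℕ,
      (Finsupp.weight ![3, 3 * b₀ + 5, 3 * b₀ + 4]) d = n
  · obtain ⟨d, hd⟩ := hex
    refine ⟨(Ideal.Quotient.mkₐ k I) (X 0 ^ d 0 * X 1 ^ d 1 * X 2 ^ d 2), ?_⟩
    rintro _ ⟨p, hp, rfl⟩
    rw [SetLike.mem_coe, mem_weightedHomogeneousSubmodule] at hp
    rw [Submodule.mem_span_singleton]
    refine ⟨∑ e ∈ p.support, coeff e p, ?_⟩
    have hmk : ∀ e ∈ p.support,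
        (Ideal.Quotient.mkₐ k I) (monomial e (1 : k))
          = (Ideal.Quotient.mkₐ k I) (X 0 ^ d 0 * X 1 ^ d 1 * X 2 ^ d 2) := by
      intro e he
      have hwe := hp (mem_support_iff.mp he)
      rw [hmon e]
      simp only [Ideal.Quotient.mkₐ_eq_mk]
      rw [Ideal.Quotient.mk_eq_mk_iff_sub_mem]
      apply hcong
      rw [← hwdeg e, ← hwdeg d, hd]
      exact hwe
    conv_rhs => rw [p.as_sum]
    rw [map_sum, Finset.sum_smul]
    simp only [AlgHom.toLinearMap_apply]
    refine Finset.sum_congr rfl fun e he => ?_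
    have : (monomial e (coeff e p) : MvPolynomial (Fin 3) k)
        = coeff e p • monomial e 1 := by
      rw [smul_monomial, smul_eq_mul, mul_one]
    rw [this, map_smul, hmk e he]
  · refine ⟨0, ?_⟩
    rintro _ ⟨p, hp, rfl⟩
    rw [SetLike.mem_coe, mem_weightedHomogeneousSubmodule] at hp
    have hp0 : p = 0 := by
      by_contra hne
      obtain ⟨e, he⟩ := exists_coeff_ne_zero hne
      exact hex ⟨e, hp he⟩
    simp [hp0]
end

section
/- Let k be a field and b₀ a positive integer. Consider the k-algebra homomorphism ψ : k[x,y,z,v] → k[x,v]/(x^{b₀+1}(x+v³)) determined by x ↦ x, v ↦ v, z ↦ −v·x^{b₀+1}, y ↦ v²·x^{b₀+1}. Then ψ is surjective and its kernel is the ideal of k[x,y,z,v] generated by the three polynomials z + v·x^{b₀+1}, y + v·z, and x^{b₀+2} + v·y. In particular, k[x,y,z,v]/(z + v x^{b₀+1}, y + v z, x^{b₀+2} + v y) is isomorphic as a k-algebra to k[x,v]/(x^{b₀+1}(x+v³)). -/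
/-!
`ψ` is the reduction mod `J` of a substitution `h : k[x,y,z,v] → k[x,v]` with section the inclusion
`g : k[x,v] → k[x,y,z,v]`, so `ψ` is surjective and `ker ψ = h⁻¹(J)`. Modulo `K` we have
`z ≡ -v x^{b₀+1}` and `y ≡ -v z ≡ v² x^{b₀+1}`, so every `a` is congruent to `g (h a)`, while
`x^{b₀+1}(x + v³) ≡ x^{b₀+2} + v y ≡ 0`. Hence `g` maps `J` into `K`, and `h a ∈ J` forces `a ∈ K`.
-/

open MvPolynomial

theorem Ideal.comap_eq_of_sub_comp_mem {A B : Type*} [CommRing A] [CommRing B]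
    {I : Ideal A} {J : Ideal B} (h : A →+* B) (g : B →+* A)
    (hJ : J ≤ I.comap g) (hI : I ≤ J.comap h) (hgh : ∀ a, a - g (h a) ∈ I) :
    J.comap h = I := by
  refine le_antisymm (fun a ha => ?_) hI
  simpa using I.add_mem (hgh a) (hJ ha)

theorem MvPolynomial.sub_mem_of_forall_X_sub_mem {R σ : Type*} [CommRing R]
    {I : Ideal (MvPolynomial σ R)} (f : MvPolynomial σ R →ₐ[R] MvPolynomial σ R)
    (hX : ∀ i, X i - f (X i) ∈ I) (p : MvPolynomial σ R) : p - f p ∈ I := by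
  induction p using MvPolynomial.induction_on with
  | C r => simp
  | add p q hp hq => simpa [add_sub_add_comm] using I.add_mem hp hq
  | mul_X p i hp =>
    have key : p * X i - f (p * X i) = p * (X i - f (X i)) + f (X i) * (p - f p) := by
      rw [map_mul]; ring
    rw [key]
    exact I.add_mem (I.mul_mem_left _ (hX i)) (I.mul_mem_left _ hp)

theorem Ideal.mem_span_triple {R : Type*} [CommRing R] {a b c x : R} (u v w : R)
    (hx : x = u * a + v * b + w * c) : x ∈ Ideal.span {a, b, c} := by
  rw [hx]
  refine add_mem (add_mem ?_ ?_) ?_ <;> exact Ideal.mul_mem_left _ _ (Ideal.subset_span (by simp))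

noncomputable section

namespace PsiCurve

variable (k : Type*) [Field k] (b₀ : ℕ)

-- `x, v` are `X 0, X 1` in `k[x,v]`, and `x, y, z, v` are `X 0, …, X 3` in `k[x,y,z,v]`.
abbrev curveIdeal : Ideal (MvPolynomial (Fin 2) k) :=
  Ideal.span {X 0 ^ (b₀ + 1) * (X 0 + X 1 ^ 3)}

abbrev relationIdeal : Ideal (MvPolynomial (Fin 4) k) :=
  Ideal.span {X 2 + X 3 * X 0 ^ (b₀ + 1), X 1 + X 3 * X 2, X 0 ^ (b₀ + 2) + X 3 * X 1}

abbrev psiLift : MvPolynomial (Fin 4) k →ₐ[k] MvPolynomial (Fin 2) k :=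
  aeval ![X 0, X 1 ^ 2 * X 0 ^ (b₀ + 1), -(X 1) * X 0 ^ (b₀ + 1), X 1]

abbrev inclusionXV : MvPolynomial (Fin 2) k →ₐ[k] MvPolynomial (Fin 4) k :=
  aeval ![X 0, X 3]

theorem psiLift_comp_inclusionXV : (psiLift k b₀).comp (inclusionXV k) = AlgHom.id k _ := by
  ext i; fin_cases i <;> simp

theorem curveIdeal_le_comap_inclusionXV :
    curveIdeal k b₀ ≤ (relationIdeal k b₀).comap (inclusionXV k) := by
  rw [Ideal.span_le, Set.singleton_subset_iff]
  exact Ideal.mem_span_triple (X 3 ^ 2) (-X 3) 1 (by simp; ring)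

theorem relationIdeal_le_comap_psiLift :
    relationIdeal k b₀ ≤ (curveIdeal k b₀).comap (psiLift k b₀) := by
  rw [Ideal.span_le]
  intro q hq
  simp only [Set.mem_insert_iff, Set.mem_singleton_iff] at hq
  rcases hq with rfl | rfl | rfl
  · exact Ideal.mem_span_singleton.mpr ⟨0, by simp⟩
  · exact Ideal.mem_span_singleton.mpr ⟨0, by simp; ring⟩
  · exact Ideal.mem_span_singleton.mpr ⟨1, by simp; ring⟩

theorem sub_inclusionXV_psiLift_mem (a : MvPolynomial (Fin 4) k) :
    a - inclusionXV k (psiLift k b₀ a) ∈ relationIdeal k b₀ := by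
  refine MvPolynomial.sub_mem_of_forall_X_sub_mem ((inclusionXV k).comp (psiLift k b₀))
    (fun i => ?_) a
  fin_cases i
  · exact Ideal.mem_span_triple 0 0 0 (by simp)
  · exact Ideal.mem_span_triple (-X 3) 1 0 (by simp; ring)
  · exact Ideal.mem_span_triple 1 0 0 (by simp)
  · exact Ideal.mem_span_triple 0 0 0 (by simp)

theorem comap_psiLift_curveIdeal :
    (curveIdeal k b₀).comap (psiLift k b₀) = relationIdeal k b₀ :=
  Ideal.comap_eq_of_sub_comp_mem (psiLift k b₀).toRingHom (inclusionXV k).toRingHom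
    (curveIdeal_le_comap_inclusionXV k b₀) (relationIdeal_le_comap_psiLift k b₀)
    (sub_inclusionXV_psiLift_mem k b₀)

end PsiCurve

end

open PsiCurve in
theorem psi_surjective_and_ker_general
    (k : Type*) [Field k] (b₀ : ℕ)
    (J : Ideal (MvPolynomial (Fin 2) k))
    (hJ : J = Ideal.span {X 0 ^ (b₀ + 1) * (X 0 + X 1 ^ 3)})
    (ψ : MvPolynomial (Fin 4) k →ₐ[k] (MvPolynomial (Fin 2) k ⧸ J))
    (hψ : ψ = aeval
      ![Ideal.Quotient.mkₐ k J (X 0),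
        Ideal.Quotient.mkₐ k J (X 1 ^ 2 * X 0 ^ (b₀ + 1)),
        Ideal.Quotient.mkₐ k J (-(X 1) * X 0 ^ (b₀ + 1)),
        Ideal.Quotient.mkₐ k J (X 1)])
    (K : Ideal (MvPolynomial (Fin 4) k))
    (hK : K = Ideal.span {X 2 + X 3 * X 0 ^ (b₀ + 1),
                          X 1 + X 3 * X 2,
                          X 0 ^ (b₀ + 2) + X 3 * X 1}) :
    Function.Surjective ψ ∧ RingHom.ker ψ = K ∧
      Nonempty ((MvPolynomial (Fin 4) k ⧸ K) ≃ₐ[k] (MvPolynomial (Fin 2) k ⧸ J)) := by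
  subst hJ hK
  have hψh : ψ = (Ideal.Quotient.mkₐ k _).comp (psiLift k b₀) := by
    rw [hψ, comp_aeval]; congr 1; ext i; fin_cases i <;> rfl
  have hsurj : Function.Surjective ψ := fun q => by
    obtain ⟨b, rfl⟩ := Ideal.Quotient.mk_surjective q
    refine ⟨inclusionXV k b, ?_⟩
    rw [hψh, AlgHom.comp_apply, ← AlgHom.comp_apply (psiLift k b₀), psiLift_comp_inclusionXV]
    rfl
  have hker : RingHom.ker ψ = relationIdeal k b₀ := by
    rw [← comap_psiLift_curveIdeal]
    ext a; simp [hψh, Ideal.Quotient.eq_zero_iff_mem]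
  exact ⟨hsurj, hker, ⟨(Ideal.quotientEquivAlgOfEq k hker.symm).trans
    (Ideal.quotientKerAlgEquivOfSurjective hsurj)⟩⟩

/-- **Equation (5) in Lemma `MainLemma`.**
Let `k` be a field and `b₀ > 0`.  The `k`-algebra homomorphism
`ψ : k[x,y,z,v] → k[x,v]/(x^{b₀+1}(x+v³))` with `x ↦ x`, `y ↦ v²x^{b₀+1}`,
`z ↦ −vx^{b₀+1}`, `v ↦ v` is surjective and its kernel is the ideal
`(z + vx^{b₀+1}, y + vz, x^{b₀+2} + vy)`.  In particular
`k[x,y,z,v]/(z + vx^{b₀+1}, y + vz, x^{b₀+2} + vy) ≅ k[x,v]/(x^{b₀+1}(x+v³))`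
as `k`-algebras.  (Variables: in `Fin 4`, `0 = x`, `1 = y`, `2 = z`, `3 = v`;
in `Fin 2`, `0 = x`, `1 = v`.) -/
theorem psi_surjective_and_ker
    (k : Type*) [Field k] (b₀ : ℕ) (hb₀ : 0 < b₀)
    (J : Ideal (MvPolynomial (Fin 2) k))
    (hJ : J = Ideal.span {X 0 ^ (b₀ + 1) * (X 0 + X 1 ^ 3)})
    (ψ : MvPolynomial (Fin 4) k →ₐ[k] (MvPolynomial (Fin 2) k ⧸ J))
    (hψ : ψ = aeval
      ![Ideal.Quotient.mkₐ k J (X 0),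
        Ideal.Quotient.mkₐ k J (X 1 ^ 2 * X 0 ^ (b₀ + 1)),
        Ideal.Quotient.mkₐ k J (-(X 1) * X 0 ^ (b₀ + 1)),
        Ideal.Quotient.mkₐ k J (X 1)])
    (K : Ideal (MvPolynomial (Fin 4) k))
    (hK : K = Ideal.span {X 2 + X 3 * X 0 ^ (b₀ + 1),
                          X 1 + X 3 * X 2,
                          X 0 ^ (b₀ + 2) + X 3 * X 1}) :
    Function.Surjective ψ ∧ RingHom.ker ψ = K ∧
      Nonempty ((MvPolynomial (Fin 4) k ⧸ K) ≃ₐ[k] (MvPolynomial (Fin 2) k ⧸ J)) :=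
  psi_surjective_and_ker_general k b₀ J hJ ψ hψ K hK
end

section
/- Let k be a field and b₀ a positive integer. Set S = k[x,v]/(x^{b₀+1}(x+v³)) and let S′ be the localization of S away from the image of the element x + v³. Then in S′ the image of x satisfies x^{b₀+1} = 0, but x^{b₀} ≠ 0. -/
open MvPolynomial

set_option maxHeartbeats 1000000
set_option synthInstance.maxHeartbeats 200000

/-- **Conclusion of Lemma `MainLemma`.**
Let `k` be a field and `b₀ > 0`.  In the localization `S′` of
`S = k[x,v]/(x^{b₀+1}(x+v³))` away from the class of `x + v³`, the image `ξ` of `x`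
satisfies `ξ^{b₀+1} = 0` but `ξ^{b₀} ≠ 0`.  (Variables: `0 = x`, `1 = v`.) -/
theorem pow_image_x_in_localization
    (k : Type*) [Field k] (b₀ : ℕ) (hb₀ : 0 < b₀)
    (J : Ideal (MvPolynomial (Fin 2) k))
    (hJ : J = Ideal.span {X 0 ^ (b₀ + 1) * (X 0 + X 1 ^ 3)})
    (ξ : Localization.Away (Ideal.Quotient.mk J (X 0 + X 1 ^ 3)))
    (hξ : ξ = algebraMap (MvPolynomial (Fin 2) k ⧸ J)
      (Localization.Away (Ideal.Quotient.mk J (X 0 + X 1 ^ 3)))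
      (Ideal.Quotient.mk J (X 0))) :
    ξ ^ (b₀ + 1) = 0 ∧ ξ ^ b₀ ≠ 0 := by
  have hrel : (Ideal.Quotient.mk J (X 0)) ^ (b₀ + 1)
      * Ideal.Quotient.mk J (X 0 + X 1 ^ 3) = 0 := by
    rw [← map_pow, ← map_mul, Ideal.Quotient.eq_zero_iff_mem, hJ]
    exact Ideal.subset_span rfl
  constructor
  · rw [hξ, ← map_pow]
    exact (IsLocalization.map_eq_zero_iff
      (Submonoid.powers (Ideal.Quotient.mk J (X 0 + X 1 ^ 3)))
      (Localization.Away (Ideal.Quotient.mk J (X 0 + X 1 ^ 3))) _).mpr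
      ⟨⟨_, Submonoid.mem_powers _⟩, by rw [mul_comm]; exact hrel⟩
  · -- map to B = k[t]/(t^{b₀+1}) sending x ↦ t, v ↦ 1
    set I : Ideal (Polynomial k) := Ideal.span {Polynomial.X ^ (b₀ + 1)} with hI
    set t : Polynomial k ⧸ I := Ideal.Quotient.mk I Polynomial.X with ht
    have htpow : t ^ (b₀ + 1) = 0 := by
      rw [ht, ← map_pow, Ideal.Quotient.eq_zero_iff_mem]
      exact Ideal.subset_span rfl
    have htb : t ^ b₀ ≠ 0 := by
      rw [ht, ← map_pow, Ne, Ideal.Quotient.eq_zero_iff_mem, hI, Ideal.mem_span_singleton]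
      intro hdvd
      have h1 : (Polynomial.X : Polynomial k) ^ b₀ ≠ 0 := pow_ne_zero _ Polynomial.X_ne_zero
      have h2 := Polynomial.natDegree_le_of_dvd hdvd h1
      simp [Polynomial.natDegree_X_pow] at h2
    let f : MvPolynomial (Fin 2) k →+* Polynomial k ⧸ I :=
      (MvPolynomial.aeval (fun i : Fin 2 => if i = 0 then t else 1)).toRingHom
    have hfx : f (X 0) = t := by
      simp only [f, AlgHom.toRingHom_eq_coe, RingHom.coe_coe, aeval_X]
      norm_num
    have hfv : f (X 1) = 1 := by
      simp only [f, AlgHom.toRingHom_eq_coe, RingHom.coe_coe, aeval_X]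
      norm_num
    have hfJ : ∀ a ∈ J, f a = 0 := by
      intro a ha
      rw [hJ, Ideal.mem_span_singleton] at ha
      obtain ⟨c, rfl⟩ := ha
      have h3 : f (X 0 ^ (b₀ + 1) * (X 0 + X 1 ^ 3)) = 0 := by
        rw [map_mul, map_pow, hfx, htpow, zero_mul]
      rw [map_mul, h3, zero_mul]
    let g : (MvPolynomial (Fin 2) k ⧸ J) →+* Polynomial k ⧸ I := Ideal.Quotient.lift J f hfJ
    have hgmk : ∀ a, g (Ideal.Quotient.mk J a) = f a := fun a => Ideal.Quotient.lift_mk J f hfJ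
    have hgr : IsUnit (g (Ideal.Quotient.mk J (X 0 + X 1 ^ 3))) := by
      rw [hgmk, map_add, map_pow, hfx, hfv, one_pow]
      exact IsNilpotent.isUnit_add_one ⟨b₀ + 1, htpow⟩
    let ψ := IsLocalization.Away.lift (S := Localization.Away
      (Ideal.Quotient.mk J (X 0 + X 1 ^ 3))) (Ideal.Quotient.mk J (X 0 + X 1 ^ 3)) hgr
    intro hzero
    have h4 : ψ (ξ ^ b₀) = 0 := by rw [hzero, map_zero]
    rw [map_pow, hξ, IsLocalization.Away.lift_eq, hgmk, hfx] at h4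
    exact htb h4
end

section
/- Let k be a field and b₀ a positive integer. Set S = k[x,v]/(x^{b₀+1}(x+v³)) and let S′ be the localization of S away from the image of the element x + v³. Then the annihilator of the element x^{b₀} ∈ S′ is contained in the nilradical of S′; equivalently, the support of the S′-module generated by x^{b₀} is all of Spec S′, i.e., the image of x^{b₀} in the localization of S′ at every prime ideal is nonzero. -/
open MvPolynomial

/-!
Write `w = x + v³`. Since `x ^ (b₀ + 1) * w = 0` in `S` and `w` is a unit in `S′`, the element
`x` is nilpotent in `S′`. If `a * x ^ b₀ = 0` in `S′` with `a = f / w ^ m`, then in `k[x,v]` the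
product `w ^ j * f * x ^ b₀` is a multiple of `x ^ (b₀ + 1) * w` for some `j`; cancelling `x ^ b₀`
and using that the prime `x` does not divide `w`, we get `x ∣ f`. So `a` is a multiple of the
nilpotent `x`, hence nilpotent.
-/

theorem Prime.dvd_of_pow_succ_mul_dvd_mul_pow {R : Type*} [CommMonoidWithZero R]
    [IsCancelMulZero R] {p w f : R} (hp : Prime p) (hpw : ¬ p ∣ w) {n j : ℕ}
    (h : p ^ (n + 1) * w ∣ w ^ j * (f * p ^ n)) : p ∣ f := by
  have hcancel : p * w ∣ w ^ j * f := by
    rwa [← mul_dvd_mul_iff_right (pow_ne_zero n hp.ne_zero), mul_assoc (w ^ j), mul_right_comm,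
      ← pow_succ']
  exact ((hp.dvd_or_dvd (dvd_of_mul_right_dvd hcancel)).resolve_left
    fun hpj ↦ hpw (hp.dvd_of_dvd_pow hpj))

theorem Ideal.Quotient.mk_dvd_of_mul_pow_eq_zero {R : Type*} [CommRing R] [IsDomain R]
    {p w : R} (hp : Prime p) (hpw : ¬ p ∣ w) {n j : ℕ}
    (f : R ⧸ Ideal.span {p ^ (n + 1) * w})
    (h : Ideal.Quotient.mk _ w ^ j * (f * Ideal.Quotient.mk _ p ^ n) = 0) :
    Ideal.Quotient.mk _ p ∣ f := by
  obtain ⟨f, rfl⟩ := Ideal.Quotient.mk_surjective f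
  rw [← map_pow, ← map_pow, ← map_mul, ← map_mul, Ideal.Quotient.eq_zero_iff_mem,
    Ideal.mem_span_singleton] at h
  exact map_dvd _ (hp.dvd_of_pow_succ_mul_dvd_mul_pow hpw h)

namespace IsLocalization.Away

variable {Q S : Type*} [CommRing Q] [CommRing S] [Algebra Q S] {w x : Q} [IsLocalization.Away w S]

theorem isNilpotent_algebraMap_of_pow_mul_eq_zero {n : ℕ} (hxw : x ^ n * w = 0) :
    IsNilpotent (algebraMap Q S x) := by
  refine ⟨n, (IsLocalization.Away.algebraMap_isUnit w).mul_left_eq_zero.1 ?_⟩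
  rw [← map_pow, ← map_mul, hxw, map_zero]

theorem algebraMap_dvd_of_mul_pow_eq_zero {n : ℕ}
    (hdvd : ∀ (f : Q) (j : ℕ), w ^ j * (f * x ^ n) = 0 → x ∣ f)
    {a : S} (ha : a * algebraMap Q S x ^ n = 0) : algebraMap Q S x ∣ a := by
  obtain ⟨⟨f, s⟩, rfl⟩ := IsLocalization.mk'_surjective (Submonoid.powers w) a
  rw [← map_pow, mul_comm, IsLocalization.mul_mk'_eq_mk'_of_mul,
    IsLocalization.mk'_eq_zero_iff] at ha
  obtain ⟨⟨_, j, rfl⟩, hj⟩ := ha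
  obtain ⟨g, rfl⟩ := hdvd f j (by rw [← hj]; ring)
  exact ⟨IsLocalization.mk' S g s, by rw [IsLocalization.mul_mk'_eq_mk'_of_mul]⟩

end IsLocalization.Away

theorem MvPolynomial.not_X_dvd_X_add_X_pow {σ R : Type*} [CommRing R] [Nontrivial R]
    {i j : σ} (hij : i ≠ j) (m : ℕ) : ¬ (X i : MvPolynomial σ R) ∣ X i + X j ^ m := by
  rw [dvd_add_right (dvd_refl _), X_pow_eq_monomial, X_dvd_monomial]
  simp [hij.symm]

theorem annihilator_pow_x_le_nilradical_general
    (k : Type*) [Field k] (b₀ : ℕ)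
    (J : Ideal (MvPolynomial (Fin 2) k))
    (hJ : J = Ideal.span {X 0 ^ (b₀ + 1) * (X 0 + X 1 ^ 3)})
    (ξ : Localization.Away (Ideal.Quotient.mk J (X 0 + X 1 ^ 3)))
    (hξ : ξ = algebraMap (MvPolynomial (Fin 2) k ⧸ J)
      (Localization.Away (Ideal.Quotient.mk J (X 0 + X 1 ^ 3)))
      (Ideal.Quotient.mk J (X 0))) :
    ∀ a : Localization.Away (Ideal.Quotient.mk J (X 0 + X 1 ^ 3)),
      a * ξ ^ b₀ = 0 → a ∈ nilradical
        (Localization.Away (Ideal.Quotient.mk J (X 0 + X 1 ^ 3))) := by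
  intro a ha
  subst hJ hξ
  set x : MvPolynomial (Fin 2) k := X 0
  set w : MvPolynomial (Fin 2) k := X 0 + X 1 ^ 3
  set J := Ideal.span {x ^ (b₀ + 1) * w}
  have hx_nilpotent : IsNilpotent (algebraMap (MvPolynomial (Fin 2) k ⧸ J)
      (Localization.Away (Ideal.Quotient.mk J w)) (Ideal.Quotient.mk J x)) :=
    IsLocalization.Away.isNilpotent_algebraMap_of_pow_mul_eq_zero (n := b₀ + 1) <| by
      rw [← map_pow, ← map_mul, Ideal.Quotient.eq_zero_iff_mem]
      exact Ideal.subset_span rfl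
  obtain ⟨c, rfl⟩ := IsLocalization.Away.algebraMap_dvd_of_mul_pow_eq_zero
    (fun f _ hf ↦ Ideal.Quotient.mk_dvd_of_mul_pow_eq_zero X_prime
      (not_X_dvd_X_add_X_pow (by decide) 3) f hf) ha
  exact Ideal.mul_mem_right c _ hx_nilpotent

/-- **Support statement in Lemma `MainLemma`.**
Let `k` be a field and `b₀ > 0`, `S = k[x,v]/(x^{b₀+1}(x+v³))` and `S′ = S[1/(x+v³)]`.
The annihilator of `x^{b₀} ∈ S′` is contained in the nilradical of `S′`; equivalently,
the support of the `S′`-module generated by `x^{b₀}` is all of `Spec S′`.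
(Variables: `0 = x`, `1 = v`.) -/
theorem annihilator_pow_x_le_nilradical
    (k : Type*) [Field k] (b₀ : ℕ) (hb₀ : 0 < b₀)
    (J : Ideal (MvPolynomial (Fin 2) k))
    (hJ : J = Ideal.span {X 0 ^ (b₀ + 1) * (X 0 + X 1 ^ 3)})
    (ξ : Localization.Away (Ideal.Quotient.mk J (X 0 + X 1 ^ 3)))
    (hξ : ξ = algebraMap (MvPolynomial (Fin 2) k ⧸ J)
      (Localization.Away (Ideal.Quotient.mk J (X 0 + X 1 ^ 3)))
      (Ideal.Quotient.mk J (X 0))) :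
    ∀ a : Localization.Away (Ideal.Quotient.mk J (X 0 + X 1 ^ 3)),
      a * ξ ^ b₀ = 0 → a ∈ nilradical
        (Localization.Away (Ideal.Quotient.mk J (X 0 + X 1 ^ 3))) :=
  annihilator_pow_x_le_nilradical_general k b₀ J hJ ξ hξ
end

section
/- Let k be a field and b₀ a positive integer, let R = k[x,y,z], and let I ⊆ R be the ideal generated by m₁ = y² − x^{b₀+2}z, m₂ = zy − x^{2b₀+3}, m₃ = z² − x^{b₀+1}y. Let α : R² → R³ be the R-linear map given by the matrix A with rows (z, x^{b₀+1}), (y, z), (x^{b₀+2}, y), and let β : R³ → R be the R-linear map given by the row vector (m₁, −m₂, m₃). Then the sequence 0 → R² →α R³ →β R → R/I → 0 is exact: α is injective, the kernel of β equals the image of α, and the image of β equals I. -/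
/-!
The columns `v = (z, y, x^{b₀+2})` and `w = (x^{b₀+1}, z, y)` of `A` have cross product
`v ⨯₃ w = (m₁, -m₂, m₃)`, so `α u = u₀ v + u₁ w` and `β t = (v ⨯₃ w) ⬝ᵥ t`. Over a domain this
complex is exact at `R²` as soon as `v ⨯₃ w ≠ 0` (take cross products with `v` and with `w`), and
exact at `R³` as soon as two coordinates `nₖ, nⱼ` of `n = v ⨯₃ w` are coprime: if `n ⬝ᵥ t = 0`,
Cramer's rule writes each `nᵢ t` as `cᵢ v + dᵢ w`, and comparing the expansions of `nⱼ nₖ t` gives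
`nⱼ cₖ = nₖ cⱼ`, so `nₖ` divides `cₖ` and `dₖ`. Here `m₃ = z² - x^{b₀+1} y` is irreducible, being
linear in `y` with coprime coefficients, and it does not divide `m₁`, as evaluation at
`(0, 1, 0)` shows.
-/

open MvPolynomial Matrix

namespace Matrix

variable {R : Type*} [CommRing R]

theorem triple_product_smul (a b c d : Fin 3 → R) :
    (a ⬝ᵥ b ⨯₃ c) • d = (d ⬝ᵥ b ⨯₃ c) • a + (d ⬝ᵥ c ⨯₃ a) • b + (d ⬝ᵥ a ⨯₃ b) • c := by
  simp_rw [cross_apply, vec3_dotProduct]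
  ext i
  fin_cases i <;>
  · simp
    ring

theorem smul_add_smul_injective_of_cross_ne_zero [NoZeroDivisors R] {v w : Fin 3 → R}
    (h : v ⨯₃ w ≠ 0) :
    Function.Injective fun u : Fin 2 → R => u 0 • v + u 1 • w := by
  intro u u' huu'
  have h0 : u 0 • v ⨯₃ w = u' 0 • v ⨯₃ w := by
    simpa [cross_self] using congrArg (· ⨯₃ w) huu'
  have h1 : u 1 • v ⨯₃ w = u' 1 • v ⨯₃ w := by
    simpa [cross_self] using congrArg (v ⨯₃ ·) huu'
  funext i
  fin_cases i
  exacts [smul_left_injective R h h0, smul_left_injective R h h1]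

theorem cross_apply_smul_eq_of_cross_dotProduct_eq_zero {v w t : Fin 3 → R}
    (ht : v ⨯₃ w ⬝ᵥ t = 0) (i : Fin 3) :
    (v ⨯₃ w) i • t = (t ⬝ᵥ w ⨯₃ Pi.single i 1) • v + (t ⬝ᵥ Pi.single i 1 ⨯₃ v) • w := by
  have := triple_product_smul (Pi.single i 1) v w t
  rwa [single_dotProduct, one_mul, dotProduct_comm t, ht, zero_smul, zero_add] at this

theorem cross_dotProduct_eq_zero_iff [NoZeroDivisors R] [DecompositionMonoid R]
    {v w t : Fin 3 → R} {j k : Fin 3} (hk : (v ⨯₃ w) k ≠ 0)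
    (hjk : IsRelPrime ((v ⨯₃ w) k) ((v ⨯₃ w) j)) :
    v ⨯₃ w ⬝ᵥ t = 0 ↔ ∃ u : Fin 2 → R, u 0 • v + u 1 • w = t := by
  refine ⟨fun ht => ?_, ?_⟩
  · set n := v ⨯₃ w
    obtain ⟨c, d, expand⟩ : ∃ c d : Fin 3 → R, ∀ i, n i • t = c i • v + d i • w :=
      ⟨_, _, cross_apply_smul_eq_of_cross_dotProduct_eq_zero ht⟩
    have hn : n ≠ 0 := fun h => hk (by simp [h])
    have hcd := smul_add_smul_injective_of_cross_ne_zero hn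
      (a₁ := ![n j * c k, n j * d k]) (a₂ := ![n k * c j, n k * d j]) (by
        simp only [cons_val_zero, cons_val_one, mul_smul, ← smul_add, ← expand]
        exact smul_comm (n j) (n k) t)
    obtain ⟨a, ha⟩ : n k ∣ c k := hjk.dvd_of_dvd_mul_left ⟨c j, congrFun hcd 0⟩
    obtain ⟨b, hb⟩ : n k ∣ d k := hjk.dvd_of_dvd_mul_left ⟨d j, congrFun hcd 1⟩
    refine ⟨![a, b], smul_right_injective _ hk ?_⟩
    simp only [cons_val_zero, cons_val_one, expand, ha, hb, mul_smul, smul_add]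
  · rintro ⟨u, rfl⟩
    simp [dotProduct_comm _ v, dotProduct_comm _ w]

end Matrix

theorem Ideal.mem_span_range_iff_exists_dotProduct {R ι : Type*} [CommRing R] [Fintype ι]
    {v : ι → R} {r : R} : r ∈ Ideal.span (Set.range v) ↔ ∃ t, v ⬝ᵥ t = r := by
  simp [Ideal.mem_span_range_iff_exists_fun, dotProduct, mul_comm]

theorem MvPolynomial.irreducible_X_sq_sub_X_pow_mul_X (k : Type*) [Field k] (n : ℕ) :
    Irreducible (X 2 ^ 2 - X 0 ^ n * X 1 : MvPolynomial (Fin 3) k) := by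
  let e := (renameEquiv k (finSuccEquiv' (1 : Fin 3))).trans (optionEquivLeft k (Fin 2))
  have he : e (X 2 ^ 2 - X 0 ^ n * X 1) =
      Polynomial.C (-X 0 ^ n) * Polynomial.X + Polynomial.C (X 1 ^ 2) := by
    have h0 : finSuccEquiv' (1 : Fin 3) 0 = some 0 := rfl
    have h1 : finSuccEquiv' (1 : Fin 3) 1 = none := rfl
    have h2 : finSuccEquiv' (1 : Fin 3) 2 = some 1 := rfl
    simp [e, h0, h1, h2, optionEquivLeft_X_some, optionEquivLeft_X_none]
    ring
  rw [← MulEquiv.irreducible_iff e, he]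
  have hX : IsRelPrime (X 0 : MvPolynomial (Fin 2) k) (X 1) :=
    X_prime.irreducible.isRelPrime_iff_not_dvd.mpr (by rw [X_dvd_X]; decide)
  exact Polynomial.irreducible_C_mul_X_add_C (neg_ne_zero.mpr (pow_ne_zero _ (X_ne_zero 0)))
    (hX.pow_left.pow_right.neg_left)

theorem hilbert_burch_sequence_exact_general
    (k : Type*) [Field k] (b₀ : ℕ)
    (x y z m₁ m₂ m₃ : MvPolynomial (Fin 3) k)
    (hx : x = X 0) (hy : y = X 1) (hz : z = X 2)
    (hm₁ : m₁ = y ^ 2 - x ^ (b₀ + 2) * z)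
    (hm₂ : m₂ = z * y - x ^ (2 * b₀ + 3))
    (hm₃ : m₃ = z ^ 2 - x ^ (b₀ + 1) * y)
    (α : (Fin 2 → MvPolynomial (Fin 3) k) → (Fin 3 → MvPolynomial (Fin 3) k))
    (hα : α = fun u => ![z * u 0 + x ^ (b₀ + 1) * u 1,
                         y * u 0 + z * u 1,
                         x ^ (b₀ + 2) * u 0 + y * u 1])
    (β : (Fin 3 → MvPolynomial (Fin 3) k) → MvPolynomial (Fin 3) k)
    (hβ : β = fun w => m₁ * w 0 - m₂ * w 1 + m₃ * w 2) :
    Function.Injective α ∧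
    (∀ w : Fin 3 → MvPolynomial (Fin 3) k, β w = 0 ↔ ∃ u, α u = w) ∧
    (∀ r : MvPolynomial (Fin 3) k,
      (∃ w, β w = r) ↔ r ∈ Ideal.span {m₁, m₂, m₃}) := by
  set v := ![z, y, x ^ (b₀ + 2)]
  set w := ![x ^ (b₀ + 1), z, y]
  have hα' : α = fun u => u 0 • v + u 1 • w := by
    rw [hα]; funext u i; fin_cases i <;> simp [v, w, mul_comm]
  have hvw : v ⨯₃ w = ![m₁, -m₂, m₃] := by
    rw [cross_apply, hm₁, hm₂, hm₃]
    funext i; fin_cases i <;> simp [v, w] <;> ring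
  have hβ' : β = fun t => v ⨯₃ w ⬝ᵥ t := by
    rw [hβ, hvw]; funext t; simp [dotProduct, Fin.sum_univ_three]; ring
  have hm₃_irred : Irreducible m₃ := by
    rw [hm₃, hx, hy, hz]; exact irreducible_X_sq_sub_X_pow_mul_X k (b₀ + 1)
  have hm₃_not_dvd : ¬ m₃ ∣ m₁ := fun h => by
    simpa [hm₁, hm₃, hx, hy, hz] using map_dvd (aeval ![(0 : k), 1, 0]) h
  have hm₃_ne : (v ⨯₃ w) 2 ≠ 0 := by simpa [hvw] using hm₃_irred.ne_zero
  refine ⟨hα' ▸ smul_add_smul_injective_of_cross_ne_zero fun h => hm₃_ne (by simp [h]),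
    fun t => ?_, fun r => ?_⟩
  · rw [hα', hβ']
    refine cross_dotProduct_eq_zero_iff (j := 0) hm₃_ne ?_
    simpa [hvw] using hm₃_irred.isRelPrime_iff_not_dvd.mpr hm₃_not_dvd
  · rw [hβ', ← Ideal.mem_span_range_iff_exists_dotProduct, hvw]
    simp only [range_cons, range_empty, Set.union_empty, Set.singleton_union, Ideal.span_insert,
      Ideal.span_singleton_neg]

/-- **The Hilbert–Burch resolution (Equation (4)).**
Let `k` be a field, `b₀ > 0`, `R = k[x,y,z]` and `I = (m₁, m₂, m₃)` the ideal of maximal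
minors of the matrix `A` with rows `(z, x^{b₀+1})`, `(y, z)`, `(x^{b₀+2}, y)`.  With
`α : R² → R³` given by `A` and `β : R³ → R` given by `(m₁, −m₂, m₃)`, the sequence
`0 → R² → R³ → R → R/I → 0` is exact: `α` is injective, `ker β = im α`, and `im β = I`.
(Variables: `0 = x`, `1 = y`, `2 = z`.) -/
theorem hilbert_burch_sequence_exact
    (k : Type*) [Field k] (b₀ : ℕ) (hb₀ : 0 < b₀)
    (x y z m₁ m₂ m₃ : MvPolynomial (Fin 3) k)
    (hx : x = X 0) (hy : y = X 1) (hz : z = X 2)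
    (hm₁ : m₁ = y ^ 2 - x ^ (b₀ + 2) * z)
    (hm₂ : m₂ = z * y - x ^ (2 * b₀ + 3))
    (hm₃ : m₃ = z ^ 2 - x ^ (b₀ + 1) * y)
    (α : (Fin 2 → MvPolynomial (Fin 3) k) → (Fin 3 → MvPolynomial (Fin 3) k))
    (hα : α = fun u => ![z * u 0 + x ^ (b₀ + 1) * u 1,
                         y * u 0 + z * u 1,
                         x ^ (b₀ + 2) * u 0 + y * u 1])
    (β : (Fin 3 → MvPolynomial (Fin 3) k) → MvPolynomial (Fin 3) k)
    (hβ : β = fun w => m₁ * w 0 - m₂ * w 1 + m₃ * w 2) :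
    Function.Injective α ∧
    (∀ w : Fin 3 → MvPolynomial (Fin 3) k, β w = 0 ↔ ∃ u, α u = w) ∧
    (∀ r : MvPolynomial (Fin 3) k,
      (∃ w, β w = r) ↔ r ∈ Ideal.span {m₁, m₂, m₃}) :=
  hilbert_burch_sequence_exact_general k b₀ x y z m₁ m₂ m₃ hx hy hz hm₁ hm₂ hm₃ α hα β hβ
end

section
/- Let b₀ be a positive integer and let Γ ⊆ ℕ be the additive submonoid of the natural numbers generated by 3, 3b₀+4, and 3b₀+5. Then the set of gaps ℕ \ Γ is finite and has exactly 2b₀ + 2 elements. -/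
/-- The "upper" submonoid containing the generators. -/
def gapsAux (b₀ : ℕ) : AddSubmonoid ℕ where
  carrier := {n | n % 3 = 0 ∨ (n % 3 = 1 ∧ 3 * b₀ + 4 ≤ n) ∨ (n % 3 = 2 ∧ 3 * b₀ + 5 ≤ n)}
  zero_mem' := by left; rfl
  add_mem' := by intro a b ha hb; simp only [Set.mem_setOf_eq] at *; omega

lemma gamma_mem_closure_iff (b₀ n : ℕ) :
    n ∈ AddSubmonoid.closure ({3, 3 * b₀ + 4, 3 * b₀ + 5} : Set ℕ) ↔
      n % 3 = 0 ∨ (n % 3 = 1 ∧ 3 * b₀ + 4 ≤ n) ∨ (n % 3 = 2 ∧ 3 * b₀ + 5 ≤ n) := by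
  constructor
  · intro hn
    have hle : AddSubmonoid.closure ({3, 3 * b₀ + 4, 3 * b₀ + 5} : Set ℕ) ≤ gapsAux b₀ := by
      rw [AddSubmonoid.closure_le]
      intro x hx
      simp only [Set.mem_insert_iff, Set.mem_singleton_iff] at hx
      have hmem : ∀ m : ℕ, m ∈ gapsAux b₀ ↔
          m % 3 = 0 ∨ (m % 3 = 1 ∧ 3 * b₀ + 4 ≤ m) ∨ (m % 3 = 2 ∧ 3 * b₀ + 5 ≤ m) :=
        fun m => Iff.rfl
      rcases hx with rfl | rfl | rfl <;> rw [SetLike.mem_coe, hmem] <;> omega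
    exact hle hn
  · intro hn
    have h3 : (3 : ℕ) ∈ AddSubmonoid.closure ({3, 3 * b₀ + 4, 3 * b₀ + 5} : Set ℕ) :=
      AddSubmonoid.subset_closure (by simp)
    have h4 : (3 * b₀ + 4 : ℕ) ∈ AddSubmonoid.closure ({3, 3 * b₀ + 4, 3 * b₀ + 5} : Set ℕ) :=
      AddSubmonoid.subset_closure (by simp)
    have h5 : (3 * b₀ + 5 : ℕ) ∈ AddSubmonoid.closure ({3, 3 * b₀ + 4, 3 * b₀ + 5} : Set ℕ) :=
      AddSubmonoid.subset_closure (by simp)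
    have hmul : ∀ k : ℕ, 3 * k ∈ AddSubmonoid.closure ({3, 3 * b₀ + 4, 3 * b₀ + 5} : Set ℕ) := by
      intro k
      have := AddSubmonoid.nsmul_mem _ h3 k
      simpa [smul_eq_mul, Nat.mul_comm] using this
    rcases hn with h | ⟨h, hle⟩ | ⟨h, hle⟩
    · have : n = 3 * (n / 3) := by omega
      rw [this]; exact hmul _
    · have : n = (3 * b₀ + 4) + 3 * ((n - (3 * b₀ + 4)) / 3) := by omega
      rw [this]; exact AddSubmonoid.add_mem _ h4 (hmul _)
    · have : n = (3 * b₀ + 5) + 3 * ((n - (3 * b₀ + 5)) / 3) := by omega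
      rw [this]; exact AddSubmonoid.add_mem _ h5 (hmul _)

/-- **Genus computation (Remark on the arithmetic genus).**
For a positive integer `b₀`, the numerical semigroup `Γ = ⟨3, 3b₀+4, 3b₀+5⟩ ⊆ ℕ`
has exactly `2b₀ + 2` gaps: the set `ℕ \ Γ` is finite of cardinality `2b₀ + 2`. -/
theorem gaps_of_numerical_semigroup
    (b₀ : ℕ) (hb₀ : 0 < b₀)
    (Γ : AddSubmonoid ℕ)
    (hΓ : Γ = AddSubmonoid.closure {3, 3 * b₀ + 4, 3 * b₀ + 5}) :
    {n : ℕ | n ∉ Γ}.Finite ∧ {n : ℕ | n ∉ Γ}.ncard = 2 * b₀ + 2 := by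
  subst hΓ
  set G : Finset ℕ :=
    ((Finset.range (b₀ + 1)).image (fun k => 3 * k + 1)) ∪
    ((Finset.range (b₀ + 1)).image (fun k => 3 * k + 2)) with hG
  have hset : {n : ℕ | n ∉ AddSubmonoid.closure ({3, 3 * b₀ + 4, 3 * b₀ + 5} : Set ℕ)} = ↑G := by
    ext n
    simp only [Set.mem_setOf_eq, gamma_mem_closure_iff, hG, Finset.coe_union, Set.mem_union,
      Finset.coe_image, Finset.coe_range, Set.mem_image, Set.mem_Iio]
    constructor
    · intro h
      by_cases h1 : n % 3 = 1
      · exact Or.inl ⟨n / 3, by omega, by omega⟩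
      · exact Or.inr ⟨n / 3, by omega, by omega⟩
    · rintro (⟨k, hk, rfl⟩ | ⟨k, hk, rfl⟩) <;> omega
  rw [hset]
  refine ⟨G.finite_toSet, ?_⟩
  rw [Set.ncard_coe_finset]
  have hdisj : Disjoint ((Finset.range (b₀ + 1)).image (fun k => 3 * k + 1))
      ((Finset.range (b₀ + 1)).image (fun k => 3 * k + 2)) := by
    rw [Finset.disjoint_left]
    intro a ha hb
    simp only [Finset.mem_image, Finset.mem_range] at ha hb
    obtain ⟨k, _, rfl⟩ := ha
    obtain ⟨l, _, hl⟩ := hb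
    omega
  rw [hG, Finset.card_union_of_disjoint hdisj,
    Finset.card_image_of_injective _ (fun a b h => by omega),
    Finset.card_image_of_injective _ (fun a b h => by omega), Finset.card_range]
  ring
end
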